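/- Assume the characteristic of F is 2. Let g be a monic divisor of x^{2n} − 1 in K[x] of degree k with 0 ≤ k ≤ 2n − 1, let D ⊆ K^{2n} be the cyclic code corresponding to the ideal ⟨g⟩ of K[x]/⟨x^{2n} − 1⟩, let h(x) = (x^{2n} − 1)/g(x) and h*(x) = x^{2n−k} h(1/x) its reciprocal polynomial with coefficient vector V_{h*} ∈ K^{2n}, and let C = Ψ^{-1}(D) ⊆ F^n. Then the alternating dual C^{⊥_a} equals the K-linear span of the k vectors T^i(Ψ^{-1}(τ(V_{h*}))) for 0 ≤ i ≤ k − 1. -/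

import Mathlib

open Polynomial

/-- The map `Ψ : F^n → K^{2n}`,
`Ψ(α₀,…,α_{n−1}) = (Tr(βα₀),…,Tr(βα_{n−1}), Tr(β̄α₀),…,Tr(β̄α_{n−1}))`, where `β̄ = β^q`. -/
def Psi (q n : ℕ) {K F : Type*} [Field K] [Field F] (Tr : F → K) (β : F)
    (α : Fin n → F) : Fin (2 * n) → K :=
  fun i =>
    if h : (i : ℕ) < n then Tr (β * α ⟨(i : ℕ), h⟩)
    else Tr (β ^ q * α ⟨(i : ℕ) - n, by have := i.isLt; omega⟩)

/-- The conjucyclic shift `T : F^n → F^n`, `T(c₀,…,c_{n−1}) = (c̄_{n−1}, c₀,…,c_{n−2})`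
with `c̄ = c^q`. -/
def Tshift (q n : ℕ) {F : Type*} [Field F] (c : Fin n → F) : Fin n → F :=
  fun i =>
    if _h : (i : ℕ) = 0 then (c ⟨n - 1, by have := i.isLt; omega⟩) ^ q
    else c ⟨(i : ℕ) - 1, by have := i.isLt; omega⟩

/-- The map `τ : K^{2n} → K^{2n}`, `τ(v₀,…,v_{2n−1}) = (−v_n,…,−v_{2n−1}, v₀,…,v_{n−1})`. -/
def tau (n : ℕ) {K : Type*} [Field K] (v : Fin (2 * n) → K) : Fin (2 * n) → K :=
  fun i =>
    if h : (i : ℕ) < n then - v ⟨n + (i : ℕ), by omega⟩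
    else v ⟨(i : ℕ) - n, by have := i.isLt; omega⟩

/-- The alternating inner product on `F^n`:
`⟨u,v⟩_a = (β̄² − β²) Σ_{i=0}^{n−1} (u_i v̄_i − ū_i v_i)`, where `x̄ = x^q`. -/
def altInner (q n : ℕ) {F : Type*} [Field F] (β : F) (u v : Fin n → F) : F :=
  ((β ^ q) ^ 2 - β ^ 2) * ∑ i : Fin n, (u i * (v i) ^ q - (u i) ^ q * v i)

/-- The coefficient vector in `K^m` of a polynomial `g ∈ K[x]`. -/
def coeffVec (m : ℕ) {K : Type*} [Field K] (g : K[X]) : Fin m → K :=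
  fun i => g.coeff (i : ℕ)

/-- The cyclic code of length `m` corresponding to the ideal `⟨g⟩` of `K[x]/⟨x^m − 1⟩`. -/
def cyclicCodeOf (m : ℕ) {K : Type*} [Field K] (g : K[X]) : Set (Fin m → K) :=
  {v | Ideal.Quotient.mk (Ideal.span {(X : K[X]) ^ m - 1})
        (∑ i : Fin m, Polynomial.C (v i) * X ^ (i : ℕ)) ∈
      Ideal.span {Ideal.Quotient.mk (Ideal.span {(X : K[X]) ^ m - 1}) g}}

/-!
The composite `τ ∘ Ψ` is a `K`-linear bijection `F^n → K^{2n}` (injective because a primitive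
`β` satisfies `β^q ≠ β`) under which the alternating form becomes the dot product,
`⟨u, v⟩_a = Ψ u ⬝ τ (Ψ v)` (a computation using `x^{q²} = x`), and which, in characteristic 2,
carries the conjucyclic shift `T` to the cyclic shift. Hence `C^{⊥_a}` is the preimage of the
dot-product dual of the cyclic code `⟨g⟩ = g · K[x]_{<2n-k}`. That dual is `h* · K[x]_{<k}`,
spanned by the `x^i h*`, `i < k`: pairing `a g` with `b h*` reads off a coefficient of
`(x^{2n} - 1) a b*`, with `b*` the reversal of `b` in degree `k`, which vanishes for degree
reasons; and both spaces have dimension `k`.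
-/

section CyclicCode

open Module

variable {K : Type*} [Field K]

noncomputable def coeffVecₗ (N : ℕ) : K[X] →ₗ[K] Fin N → K := LinearMap.pi fun i => lcoeff K i

@[simp]
lemma coeffVecₗ_apply (N : ℕ) (p : K[X]) : coeffVecₗ N p = coeffVec N p := rfl

lemma coeffVec_eq_degreeLTEquiv {N : ℕ} {p : K[X]} (hp : p ∈ degreeLT K N) :
    coeffVec N p = degreeLTEquiv K N ⟨p, hp⟩ := rfl

lemma sum_C_mul_X_pow_eq_degreeLTEquiv_symm (N : ℕ) (v : Fin N → K) :
    ∑ i : Fin N, C (v i) * X ^ (i : ℕ) = ((degreeLTEquiv K N).symm v : K[X]) := by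
  simp only [C_mul_X_pow_eq_monomial]
  rfl

lemma mul_mem_degreeLT {m d : ℕ} {a p : K[X]} (ha : a ∈ degreeLT K m) (hp : p.natDegree ≤ d) :
    a * p ∈ degreeLT K (m + d) := by
  rcases eq_or_ne p 0 with rfl | hp0
  · simp
  rw [mem_degreeLT] at ha ⊢
  calc (a * p).degree ≤ a.degree + p.degree := degree_mul_le a p
    _ < m + d :=
      WithBot.add_lt_add_of_lt_of_le (degree_ne_bot.mpr hp0) ha (degree_le_of_natDegree_le hp)

noncomputable def mulDegreeLT (N m : ℕ) (p : K[X]) : Submodule K (Fin N → K) :=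
  (degreeLT K m).map (coeffVecₗ N ∘ₗ LinearMap.mulRight K p)

lemma finrank_mulDegreeLT {N m : ℕ} {p : K[X]} (hp : p ≠ 0) (hmN : m + p.natDegree ≤ N) :
    finrank K (mulDegreeLT N m p) = m := by
  set f := coeffVecₗ N ∘ₗ LinearMap.mulRight K p
  have hinj : Function.Injective (f ∘ₗ (degreeLT K m).subtype) := by
    rintro ⟨a, ha⟩ ⟨b, hb⟩ hab
    have hN := degreeLT_mono (R := K) hmN
    have := (degreeLTEquiv K N).injective (a₁ := ⟨a * p, hN (mul_mem_degreeLT ha le_rfl)⟩)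
      (a₂ := ⟨b * p, hN (mul_mem_degreeLT hb le_rfl)⟩) hab
    exact Subtype.ext (mul_right_cancel₀ hp (congrArg Subtype.val this))
  rw [mulDegreeLT, ← Submodule.range_subtype (degreeLT K m), ← LinearMap.range_comp,
    LinearMap.finrank_range_of_inj hinj, (degreeLTEquiv K m).finrank_eq, finrank_fin_fun]

lemma mulDegreeLT_eq_span (N m : ℕ) (p : K[X]) :
    mulDegreeLT N m p =
      Submodule.span K (Set.range fun i : Fin m => coeffVec N (X ^ (i : ℕ) * p)) := by
  classical
  rw [mulDegreeLT, degreeLT_eq_span_X_pow, Submodule.map_span]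
  congr 1
  ext v
  simp [Fin.exists_iff]

lemma mem_cyclicCodeOf_iff {N : ℕ} {g : K[X]} (hdvd : g ∣ X ^ N - 1) (v : Fin N → K) :
    v ∈ cyclicCodeOf N g ↔ g ∣ ((degreeLTEquiv K N).symm v : K[X]) := by
  have hle : Ideal.span {(X : K[X]) ^ N - 1} ≤ Ideal.span {g} := by
    rwa [Ideal.span_singleton_le_span_singleton]
  have hspan : Ideal.span {Ideal.Quotient.mk (Ideal.span {(X : K[X]) ^ N - 1}) g} =
      (Ideal.span {g}).map (Ideal.Quotient.mk _) := by
    rw [Ideal.map_span, Set.image_singleton]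
  rw [cyclicCodeOf, Set.mem_ofPred_eq, sum_C_mul_X_pow_eq_degreeLTEquiv_symm, hspan,
    Ideal.mem_quotient_iff_mem hle, Ideal.mem_span_singleton]

lemma natDegree_add_natDegree_div_eq {N : ℕ} (hN : 0 < N) {g : K[X]} (hg : g.Monic)
    (hdvd : g ∣ X ^ N - 1) : g.natDegree + ((X ^ N - 1) / g).natDegree = N := by
  have hgh : g * ((X ^ N - 1) / g) = X ^ N - 1 := EuclideanDomain.mul_div_cancel' hg.ne_zero hdvd
  have hX : (X : K[X]) ^ N - 1 ≠ 0 := X_pow_sub_C_ne_zero hN (1 : K)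
  rw [← natDegree_mul hg.ne_zero (right_ne_zero_of_mul (hgh ▸ hX)), hgh, ← C_1,
    natDegree_X_pow_sub_C]

lemma coe_mulDegreeLT_eq_cyclicCodeOf {N : ℕ} (hN : 0 < N) {g : K[X]} (hg : g.Monic)
    (hdvd : g ∣ X ^ N - 1) :
    (mulDegreeLT N (N - g.natDegree) g : Set (Fin N → K)) = cyclicCodeOf N g := by
  have hk := natDegree_add_natDegree_div_eq hN hg hdvd
  ext v
  rw [mem_cyclicCodeOf_iff hdvd, SetLike.mem_coe, mulDegreeLT, Submodule.mem_map]
  simp only [LinearMap.comp_apply, coeffVecₗ_apply, LinearMap.mulRight_apply]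
  constructor
  · rintro ⟨a, ha, rfl⟩
    have hag := mul_mem_degreeLT ha (le_refl g.natDegree)
    rw [Nat.sub_add_cancel (by omega)] at hag
    rw [coeffVec_eq_degreeLTEquiv hag, LinearEquiv.symm_apply_apply]
    exact dvd_mul_left g a
  · rintro ⟨a, ha⟩
    have hP : a * g ∈ degreeLT K N := by
      rw [mul_comm, ← ha]
      exact Subtype.property _
    have hv : (⟨a * g, hP⟩ : degreeLT K N) = (degreeLTEquiv K N).symm v :=
      Subtype.ext ((mul_comm a g).trans ha.symm)
    refine ⟨a, ?_, by rw [coeffVec_eq_degreeLTEquiv hP, hv, LinearEquiv.apply_symm_apply]⟩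
    rcases eq_or_ne a 0 with rfl | ha0
    · exact zero_mem _
    rw [mem_degreeLT, ← natDegree_lt_iff_degree_lt ha0]
    rw [mem_degreeLT, ← natDegree_lt_iff_degree_lt (mul_ne_zero ha0 hg.ne_zero),
      natDegree_mul ha0 hg.ne_zero] at hP
    omega

lemma dotProduct_coeffVec {N : ℕ} {A : K[X]} (hA : A ∈ degreeLT K N) (B : K[X]) :
    coeffVec N A ⬝ᵥ coeffVec N B = (A * B.reflect N).coeff N := by
  rw [coeff_mul, Finset.Nat.sum_antidiagonal_eq_sum_range_succ
      (fun i j => A.coeff i * (B.reflect N).coeff j), Finset.sum_range_succ,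
    coeff_eq_zero_of_degree_lt (mem_degreeLT.mp hA), zero_mul, add_zero, dotProduct,
    ← Fin.sum_univ_eq_sum_range]
  refine Finset.sum_congr rfl fun i _ => ?_
  rw [coeff_reflect, revAt_le (Nat.sub_le N i), Nat.sub_sub_self i.is_lt.le]
  rfl

lemma natDegree_le_of_mem_degreeLT {m : ℕ} {b : K[X]} (hb : b ∈ degreeLT K m) :
    b.natDegree ≤ m := by
  rcases eq_or_ne b 0 with rfl | hb0
  · simp
  · exact ((natDegree_lt_iff_degree_lt hb0).mpr (mem_degreeLT.mp hb)).le

lemma dotProduct_coeffVec_mul_eq_zero {N : ℕ} {g h a b : K[X]} (hgh : g * h = X ^ N - 1)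
    (hdeg : g.natDegree + h.natDegree = N) (ha : a ∈ degreeLT K (N - g.natDegree))
    (hb : b ∈ degreeLT K g.natDegree) :
    coeffVec N (a * g) ⬝ᵥ coeffVec N (b * h.reverse) = 0 := by
  set k := g.natDegree
  have hbk := natDegree_le_of_mem_degreeLT hb
  have hrefl : (b * h.reverse).reflect N = b.reflect k * h := by
    rw [← hdeg, reflect_mul _ _ hbk (reverse_natDegree_le h), reverse, reflect_reflect]
  have hc : a * b.reflect k ∈ degreeLT K N := by
    have := mul_mem_degreeLT ha (natDegree_reflect_le.trans (max_eq_left hbk).le)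
    rwa [Nat.sub_add_cancel (by omega)] at this
  have hag : a * g ∈ degreeLT K N := by
    have := mul_mem_degreeLT ha (le_refl k)
    rwa [Nat.sub_add_cancel (by omega)] at this
  rw [dotProduct_coeffVec hag, hrefl,
    show a * g * (b.reflect k * h) = X ^ N * (a * b.reflect k) - a * b.reflect k by
      linear_combination (a * b.reflect k) * hgh,
    coeff_sub, coeff_X_pow_mul', if_pos le_rfl, Nat.sub_self, mul_coeff_zero, coeff_reflect,
    revAt_le (Nat.zero_le k), Nat.sub_zero, coeff_eq_zero_of_degree_lt (mem_degreeLT.mp hb),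
    coeff_eq_zero_of_degree_lt (mem_degreeLT.mp hc), mul_zero, sub_zero]

lemma nondegenerate_dotProductBilin (N : ℕ) :
    (dotProductBilin K K : LinearMap.BilinForm K (Fin N → K)).Nondegenerate :=
  ⟨fun v hv => dotProduct_eq_zero v hv,
    fun w hw => dotProduct_eq_zero w fun v => (dotProduct_comm w v).trans (hw v)⟩

theorem orthogonal_mulDegreeLT_eq {N : ℕ} (hN : 0 < N) {g : K[X]} (hg : g.Monic)
    (hdvd : g ∣ X ^ N - 1) :
    LinearMap.BilinForm.orthogonal (dotProductBilin K K) (mulDegreeLT N (N - g.natDegree) g) =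
      mulDegreeLT N g.natDegree ((X ^ N - 1) / g).reverse := by
  have hdeg := natDegree_add_natDegree_div_eq hN hg hdvd
  set h := ((X : K[X]) ^ N - 1) / g
  have hgh : g * h = X ^ N - 1 := EuclideanDomain.mul_div_cancel' hg.ne_zero hdvd
  have hh : h ≠ 0 := right_ne_zero_of_mul (hgh ▸ X_pow_sub_C_ne_zero hN (1 : K))
  symm
  apply Submodule.eq_of_le_of_finrank_eq
  · rintro _ ⟨b, hb, rfl⟩
    rw [LinearMap.BilinForm.mem_orthogonal_iff]
    rintro _ ⟨a, ha, rfl⟩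
    exact dotProduct_coeffVec_mul_eq_zero hgh hdeg ha hb
  · rw [LinearMap.BilinForm.finrank_orthogonal (nondegenerate_dotProductBilin N),
      finrank_mulDegreeLT hg.ne_zero (by omega),
      finrank_mulDegreeLT (mt reverse_eq_zero.mp hh) (by have := reverse_natDegree_le h; omega),
      finrank_fin_fun]
    omega

end CyclicCode

lemma pow_pow_of_card_eq_sq {F : Type*} [Field F] [Fintype F] {q : ℕ}
    (hF : Fintype.card F = q ^ 2) (x : F) : (x ^ q) ^ q = x := by
  rw [← pow_mul, ← sq, ← hF, FiniteField.pow_card]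

section FiniteFieldPair

open Module

variable {K F : Type*} [Field K] [Fintype K] [Field F] [Fintype F] [Algebra K F]

lemma finrank_eq_two_of_card_eq_sq (hF : Fintype.card F = Fintype.card K ^ 2) :
    finrank K F = 2 :=
  Nat.pow_right_injective Fintype.one_lt_card
    ((card_eq_pow_finrank (K := K) (V := F)).symm.trans hF)

lemma algebraMap_trace_eq_add_pow_card (hF : Fintype.card F = Fintype.card K ^ 2) (x : F) :
    algebraMap K F (Algebra.trace K F x) = x + x ^ Fintype.card K := by
  rw [FiniteField.algebraMap_trace_eq_sum_pow, finrank_eq_two_of_card_eq_sq hF,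
    Nat.card_eq_fintype_card]
  simp [Finset.sum_range_succ]

lemma trace_pow_card (hF : Fintype.card F = Fintype.card K ^ 2) (x : F) :
    Algebra.trace K F (x ^ Fintype.card K) = Algebra.trace K F x := by
  apply (algebraMap K F).injective
  rw [algebraMap_trace_eq_add_pow_card hF, algebraMap_trace_eq_add_pow_card hF,
    pow_pow_of_card_eq_sq hF, add_comm]

lemma exists_pow_card_ne_self (hF : Fintype.card F = Fintype.card K ^ 2) :
    ∃ x : F, x ^ Fintype.card K ≠ x := by
  by_contra! h
  have h1 : FiniteField.frobeniusAlgHom K F = 1 := AlgHom.ext h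
  have := FiniteField.orderOf_frobeniusAlgHom K F
  rw [h1, orderOf_one, finrank_eq_two_of_card_eq_sq hF] at this
  omega

lemma pow_card_ne_self_of_generator (hF : Fintype.card F = Fintype.card K ^ 2) {β : F}
    (hβ : ∀ x : F, x ≠ 0 → ∃ j : ℕ, x = β ^ j) : β ^ Fintype.card K ≠ β := by
  intro hβq
  obtain ⟨x, hx⟩ := exists_pow_card_ne_self hF
  rcases eq_or_ne x 0 with rfl | hx0
  · exact hx (zero_pow Fintype.card_ne_zero)
  · obtain ⟨j, rfl⟩ := hβ x hx0
    exact hx (by rw [← pow_mul, mul_comm, pow_mul, hβq])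

lemma eq_zero_of_trace_mul_eq_zero (hF : Fintype.card F = Fintype.card K ^ 2) {β a : F}
    (hβ : (β ^ Fintype.card K) ^ 2 ≠ β ^ 2) (h₁ : Algebra.trace K F (β * a) = 0)
    (h₂ : Algebra.trace K F (β ^ Fintype.card K * a) = 0) : a = 0 := by
  set q := Fintype.card K
  replace h₁ := congrArg (algebraMap K F) h₁
  replace h₂ := congrArg (algebraMap K F) h₂
  rw [algebraMap_trace_eq_add_pow_card hF, map_zero, mul_pow] at h₁ h₂
  rw [pow_pow_of_card_eq_sq hF] at h₂
  have : (β ^ 2 - (β ^ q) ^ 2) * a = 0 := by linear_combination β * h₁ - β ^ q * h₂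
  exact (mul_eq_zero.mp this).resolve_left (sub_ne_zero.mpr hβ.symm)

lemma sq_pow_card_ne_sq_of_generator (hchar : ringChar F = 2)
    (hF : Fintype.card F = Fintype.card K ^ 2) {β : F}
    (hβ : ∀ x : F, x ≠ 0 → ∃ j : ℕ, x = β ^ j) : (β ^ Fintype.card K) ^ 2 ≠ β ^ 2 :=
  have := ringChar.of_eq hchar
  CharTwo.sq_injective.ne (pow_card_ne_self_of_generator hF hβ)

end FiniteFieldPair

lemma sum_fin_two_mul {M : Type*} [AddCommMonoid M] {n : ℕ} (G : Fin (2 * n) → M) :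
    ∑ j, G j = ∑ i : Fin n, (G ⟨i, by omega⟩ + G ⟨n + i, by omega⟩) := by
  rw [← (finCongr (two_mul n)).symm.sum_comp, Fin.sum_univ_add, ← Finset.sum_add_distrib]
  rfl

section Psi

variable {K F : Type*} [Field K] [Field F] {q n : ℕ}

lemma psi_apply_left (Tr : F → K) (β : F) (α : Fin n → F) (i : Fin n) :
    Psi q n Tr β α ⟨i, by omega⟩ = Tr (β * α i) := by
  simp [Psi]

lemma psi_apply_right (Tr : F → K) (β : F) (α : Fin n → F) (i : Fin n) :
    Psi q n Tr β α ⟨n + i, by omega⟩ = Tr (β ^ q * α i) := by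
  simp [Psi]

variable [Algebra K F]

variable (K) in
noncomputable def psiₗ (q n : ℕ) (β : F) : (Fin n → F) →ₗ[K] Fin (2 * n) → K where
  toFun := Psi q n (Algebra.trace K F) β
  map_add' a b := by
    funext i
    by_cases hi : (i : ℕ) < n <;> simp [Psi, hi, mul_add]
  map_smul' c a := by
    funext i
    by_cases hi : (i : ℕ) < n <;> simp [Psi, hi]

variable [Fintype K] [Fintype F]

lemma psi_injective (hchar : ringChar F = 2) (hF : Fintype.card F = Fintype.card K ^ 2) {β : F}
    (hβ : ∀ x : F, x ≠ 0 → ∃ j : ℕ, x = β ^ j) :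
    Function.Injective (Psi (Fintype.card K) n (Algebra.trace K F) β) := by
  refine (injective_iff_map_eq_zero (psiₗ K (Fintype.card K) n β)).mpr
    fun a ha => funext fun i => ?_
  refine eq_zero_of_trace_mul_eq_zero hF (sq_pow_card_ne_sq_of_generator hchar hF hβ) ?_ ?_
  · simpa [psiₗ, psi_apply_left] using congrFun ha ⟨i, by omega⟩
  · simpa [psiₗ, psi_apply_right] using congrFun ha ⟨n + i, by omega⟩

lemma psi_bijective (hchar : ringChar F = 2) (hF : Fintype.card F = Fintype.card K ^ 2) {β : F}
    (hβ : ∀ x : F, x ≠ 0 → ∃ j : ℕ, x = β ^ j) :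
    Function.Bijective (Psi (Fintype.card K) n (Algebra.trace K F) β) := by
  rw [Fintype.bijective_iff_injective_and_card]
  refine ⟨psi_injective hchar hF hβ, ?_⟩
  simp [hF, pow_mul]

end Psi

section Tau

variable {K : Type*} [Field K] {n : ℕ}

lemma tau_apply_left (v : Fin (2 * n) → K) (i : Fin n) :
    tau n v ⟨i, by omega⟩ = - v ⟨n + i, by omega⟩ := by
  simp [tau]

lemma tau_apply_right (v : Fin (2 * n) → K) (i : Fin n) :
    tau n v ⟨n + i, by omega⟩ = v ⟨i, by omega⟩ := by
  simp [tau]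

lemma tau_involutive [CharP K 2] : Function.Involutive (tau n : (Fin (2 * n) → K) → _) := by
  intro v
  funext i
  by_cases hi : (i : ℕ) < n
  · simp [tau, hi, CharTwo.neg_eq]
  · have : (i : ℕ) - n < n := by omega
    simp [tau, hi, this, Nat.add_sub_cancel' (not_lt.mp hi), CharTwo.neg_eq]

variable (K) in
def tauₗ (n : ℕ) : (Fin (2 * n) → K) →ₗ[K] Fin (2 * n) → K where
  toFun := tau n
  map_add' a b := by
    funext i
    by_cases hi : (i : ℕ) < n <;> simp [tau, hi, add_comm]
  map_smul' c a := by
    funext i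
    by_cases hi : (i : ℕ) < n <;> simp [tau, hi]

end Tau

def cycShift {α : Type*} (N : ℕ) (v : Fin N → α) : Fin N → α :=
  fun i => if h : (i : ℕ) = 0 then v ⟨N - 1, by omega⟩ else v ⟨i - 1, by omega⟩

lemma cycShift_coeffVec {K : Type*} [Field K] {N : ℕ} {p : K[X]} (hp : p.coeff (N - 1) = 0) :
    cycShift N (coeffVec N p) = coeffVec N (X * p) := by
  funext i
  by_cases h0 : (i : ℕ) = 0
  · simp [cycShift, coeffVec, h0, hp]
  · obtain ⟨j, hj⟩ := Nat.exists_eq_succ_of_ne_zero h0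
    simp [cycShift, coeffVec, hj, coeff_X_mul]

section Shift

variable {K F : Type*} [Field K] [Fintype K] [Field F] [Fintype F] [Algebra K F] {n : ℕ}

lemma algebraMap_dotProduct_psi_tau_psi (hF : Fintype.card F = Fintype.card K ^ 2) (β : F)
    (u v : Fin n → F) :
    algebraMap K F (Psi (Fintype.card K) n (Algebra.trace K F) β u ⬝ᵥ
        tau n (Psi (Fintype.card K) n (Algebra.trace K F) β v)) =
      altInner (Fintype.card K) n β u v := by
  rw [dotProduct, sum_fin_two_mul, map_sum, altInner, Finset.mul_sum]
  refine Finset.sum_congr rfl fun i _ => ?_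
  simp only [tau_apply_left, tau_apply_right, psi_apply_left, psi_apply_right, map_add, map_mul,
    map_neg, algebraMap_trace_eq_add_pow_card hF, mul_pow, pow_pow_of_card_eq_sq hF]
  ring

lemma tau_psi_tshift [CharP K 2] (hF : Fintype.card F = Fintype.card K ^ 2) (hn : 0 < n) (β : F)
    (c : Fin n → F) :
    tau n (Psi (Fintype.card K) n (Algebra.trace K F) β (Tshift (Fintype.card K) n c)) =
      cycShift (2 * n) (tau n (Psi (Fintype.card K) n (Algebra.trace K F) β c)) := by
  have htr := trace_pow_card hF
  have hconj (x y : F) : Algebra.trace K F (x * y ^ Fintype.card K) =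
      Algebra.trace K F (x ^ Fintype.card K * y) := by
    rw [← htr, mul_pow, pow_pow_of_card_eq_sq hF]
  funext i
  rcases lt_trichotomy (i : ℕ) n with hi | hi | hi
  · by_cases h0 : (i : ℕ) = 0
    · have h1 : ¬ 2 * n - 1 < n := by omega
      have h2 : 2 * n - 1 - n = n - 1 := by omega
      simp [tau, Psi, Tshift, cycShift, hn, h0, h1, h2, ← mul_pow, htr, CharTwo.neg_eq]
    · have h1 : (i : ℕ) - 1 < n := by omega
      simp [tau, Psi, Tshift, cycShift, hi, h0, h1]
  · simp [tau, Psi, Tshift, cycShift, hi, hn, hn.ne', hconj, CharTwo.neg_eq]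
  · have h1 : ¬ (i : ℕ) < n := by omega
    have h2 : (i : ℕ) - n < n := by omega
    have h3 : (i : ℕ) - n ≠ 0 := by omega
    have h4 : (i : ℕ) ≠ 0 := by omega
    have h5 : ¬ (i : ℕ) - 1 < n := by omega
    have h6 : (i : ℕ) - n - 1 = i - 1 - n := by omega
    have h7 : (i : ℕ) - 1 - n < n := by omega
    simp [tau, Psi, Tshift, cycShift, h1, h2, h3, h4, h5, h6, h7]

lemma tau_psi_iterate_tshift [CharP K 2] (hF : Fintype.card F = Fintype.card K ^ 2) (hn : 0 < n)
    (β : F) {c : Fin n → F} {p : K[X]}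
    (hc : tau n (Psi (Fintype.card K) n (Algebra.trace K F) β c) = coeffVec (2 * n) p) :
    ∀ j, p.natDegree + j < 2 * n →
      tau n (Psi (Fintype.card K) n (Algebra.trace K F) β ((Tshift (Fintype.card K) n)^[j] c)) =
        coeffVec (2 * n) (X ^ j * p)
  | 0, _ => by simpa using hc
  | j + 1, hj => by
    have hcoeff : (X ^ j * p).coeff (2 * n - 1) = 0 := by
      rw [coeff_X_pow_mul', if_pos (by omega)]
      exact coeff_eq_zero_of_natDegree_lt (by omega)
    rw [Function.iterate_succ_apply', tau_psi_tshift hF hn,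
      tau_psi_iterate_tshift hF hn β hc j (by omega), cycShift_coeffVec hcoeff, ← mul_assoc,
      ← pow_succ']

lemma forall_altInner_eq_zero_iff (hchar : ringChar F = 2)
    (hF : Fintype.card F = Fintype.card K ^ 2) {β : F}
    (hβ : ∀ x : F, x ≠ 0 → ∃ j : ℕ, x = β ^ j) (D : Set (Fin (2 * n) → K)) (v : Fin n → F) :
    (∀ u ∈ Psi (Fintype.card K) n (Algebra.trace K F) β ⁻¹' D,
        altInner (Fintype.card K) n β u v = 0) ↔
      ∀ d ∈ D, d ⬝ᵥ tau n (Psi (Fintype.card K) n (Algebra.trace K F) β v) = 0 := by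
  simp only [(psi_bijective hchar hF hβ).2.forall, Set.mem_preimage,
    ← algebraMap_dotProduct_psi_tau_psi hF, map_eq_zero_iff _ (algebraMap K F).injective]

lemma map_span_iterate_tshift [CharP K 2] (hF : Fintype.card F = Fintype.card K ^ 2) (hn : 0 < n)
    {g : K[X]} (hg : g.Monic) (hdvd : g ∣ X ^ (2 * n) - 1) (β : F) {w₀ : Fin n → F}
    (hw₀ : tau n (Psi (Fintype.card K) n (Algebra.trace K F) β w₀) =
      coeffVec (2 * n) (((X : K[X]) ^ (2 * n) - 1) / g).reverse) :
    (Submodule.span K (Set.range fun i : Fin g.natDegree =>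
        (Tshift (Fintype.card K) n)^[(i : ℕ)] w₀)).map (tauₗ K n ∘ₗ psiₗ K (Fintype.card K) n β) =
      mulDegreeLT (2 * n) g.natDegree (((X : K[X]) ^ (2 * n) - 1) / g).reverse := by
  have hdeg := natDegree_add_natDegree_div_eq (by omega) hg hdvd
  have := reverse_natDegree_le (((X : K[X]) ^ (2 * n) - 1) / g)
  rw [Submodule.map_span, ← Set.range_comp, mulDegreeLT_eq_span]
  congr 2
  funext i
  exact tau_psi_iterate_tshift hF hn β hw₀ i (by have := i.isLt; omega)

end Shift

lemma eq_trace_of_algebraMap_eq {K F : Type*} [Field K] [Fintype K] [Field F] [Fintype F]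
    [Algebra K F] (hF : Fintype.card F = Fintype.card K ^ 2) {Tr : F → K}
    (hTr : ∀ x : F, algebraMap K F (Tr x) = x + x ^ Fintype.card K) : Tr = Algebra.trace K F :=
  funext fun x => (algebraMap K F).injective (by rw [hTr, algebraMap_trace_eq_add_pow_card hF])

theorem stmt16_general (q n k : ℕ) (hn : 0 < n) {K F : Type*} [Field K] [Fintype K] [Field F]
    [Fintype F] [Algebra K F] (hchar : ringChar F = 2)
    (hK : Fintype.card K = q) (hF : Fintype.card F = q ^ 2)
    (β : F) (hβ : ∀ x : F, x ≠ 0 → ∃ j : ℕ, x = β ^ j)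
    (Tr : F → K) (hTr : ∀ x : F, algebraMap K F (Tr x) = x + x ^ q)
    (g : K[X]) (hg : g.Monic) (hdvd : g ∣ X ^ (2 * n) - 1)
    (hdeg : g.natDegree = k) :
    {v : Fin n → F | ∀ u ∈ Psi q n Tr β ⁻¹' cyclicCodeOf (2 * n) g,
        altInner q n β u v = 0} =
      (Submodule.span K (Set.range fun i : Fin k =>
          (Tshift q n)^[(i : ℕ)]
            (Function.invFun (Psi q n Tr β)
              (tau n (coeffVec (2 * n) (((X : K[X]) ^ (2 * n) - 1) / g).reverse)))) :
        Set (Fin n → F)) := by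
  subst hK hdeg
  obtain rfl := eq_trace_of_algebraMap_eq hF hTr
  have := ringChar.of_eq hchar
  have : CharP K 2 := (algebraMap K F).charP (algebraMap K F).injective 2
  have hN : 0 < 2 * n := by omega
  have hbij := psi_bijective (n := n) hchar hF hβ
  have hf : Function.Injective (tauₗ K n ∘ₗ psiₗ K (Fintype.card K) n β) :=
    tau_involutive.injective.comp hbij.1
  ext v
  rw [Set.mem_ofPred_eq, forall_altInner_eq_zero_iff hchar hF hβ,
    ← coe_mulDegreeLT_eq_cyclicCodeOf hN hg hdvd, SetLike.mem_coe,
    ← Submodule.comap_map_eq_of_injective hf (Submodule.span K _), Submodule.mem_comap,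
    map_span_iterate_tshift hF hn hg hdvd β (by rw [Function.invFun_eq (hbij.2 _), tau_involutive]),
    ← orthogonal_mulDegreeLT_eq hN hg hdvd, LinearMap.BilinForm.mem_orthogonal_iff]
  rfl

/-- Assume `char F = 2`.  Let `g` be a monic divisor of `x^{2n} − 1` in
`K[x]` of degree `k` with `0 ≤ k ≤ 2n − 1`, `D ⊆ K^{2n}` the cyclic code corresponding to
`⟨g⟩`, `h = (x^{2n} − 1)/g` with reciprocal polynomial `h* = x^{2n−k}h(1/x)` (`h.reverse`)
and coefficient vector `V_{h*} ∈ K^{2n}`, and `C = Ψ⁻¹(D) ⊆ F^n`.  Then the alternating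
dual `C^{⊥_a}` equals the `K`-linear span of the `k` vectors `T^i(Ψ⁻¹(τ(V_{h*})))`,
`0 ≤ i ≤ k − 1`. -/
theorem stmt16 (q n k : ℕ) (hn : 0 < n) {K F : Type*} [Field K] [Fintype K] [Field F]
    [Fintype F] [Algebra K F] (hchar : ringChar F = 2)
    (hK : Fintype.card K = q) (hF : Fintype.card F = q ^ 2)
    (β : F) (hβ : ∀ x : F, x ≠ 0 → ∃ j : ℕ, x = β ^ j)
    (Tr : F → K) (hTr : ∀ x : F, algebraMap K F (Tr x) = x + x ^ q)
    (g : K[X]) (hg : g.Monic) (hdvd : g ∣ X ^ (2 * n) - 1)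
    (hdeg : g.natDegree = k) (hk : k ≤ 2 * n - 1) :
    {v : Fin n → F | ∀ u ∈ Psi q n Tr β ⁻¹' cyclicCodeOf (2 * n) g,
        altInner q n β u v = 0} =
      (Submodule.span K (Set.range fun i : Fin k =>
          (Tshift q n)^[(i : ℕ)]
            (Function.invFun (Psi q n Tr β)
              (tau n (coeffVec (2 * n) (((X : K[X]) ^ (2 * n) - 1) / g).reverse)))) :
        Set (Fin n → F)) :=
  stmt16_general q n k hn hchar hK hF β hβ Tr hTr g hg hdvd hdeg
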